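/- Let F_n, F be cumulative distribution functions on R such that F_n(t) → F(t) at every continuity point t of F. Then the generalized inverses (quantile functions) satisfy F_n⁻¹(u) → F⁻¹(u) at every continuity point u ∈ (0,1) of F⁻¹. -/
import Mathlib


open Filter

section QuantileAux

variable {G : ℝ → ℝ}

lemma quantAux_nonempty (htop : Tendsto G atTop (nhds 1)) {v : ℝ} (hv1 : v < 1) :
    {t : ℝ | v ≤ G t}.Nonempty := by
  obtain ⟨t, ht⟩ := (htop.eventually (eventually_gt_nhds hv1)).exists
  exact ⟨t, ht.le⟩

lemma quantAux_bdd (hmono : Monotone G) (hbot : Tendsto G atBot (nhds 0)) {v : ℝ}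
    (hv0 : 0 < v) : BddBelow {t : ℝ | v ≤ G t} := by
  obtain ⟨t0, ht0⟩ := (hbot.eventually (eventually_lt_nhds hv0)).exists
  refine ⟨t0, fun s hs => ?_⟩
  by_contra h
  push_neg at h
  exact absurd (hs.trans (hmono h.le)) (not_le.2 ht0)

lemma quantAux_mem (hmono : Monotone G) (hrc : ∀ t, ContinuousWithinAt G (Set.Ici t) t)
    (htop : Tendsto G atTop (nhds 1)) (hbot : Tendsto G atBot (nhds 0))
    {v : ℝ} (hv0 : 0 < v) (hv1 : v < 1) :
    v ≤ G (sInf {t : ℝ | v ≤ G t}) := by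
  set S := {t : ℝ | v ≤ G t} with hS
  have hne : S.Nonempty := quantAux_nonempty htop hv1
  have hbdd : BddBelow S := quantAux_bdd hmono hbot hv0
  have h1 : Tendsto G (nhdsWithin (sInf S) (Set.Ioi (sInf S))) (nhds (G (sInf S))) :=
    (hrc (sInf S)).mono_left (nhdsWithin_mono _ Set.Ioi_subset_Ici_self)
  refine ge_of_tendsto h1 ?_
  filter_upwards [self_mem_nhdsWithin] with t ht
  obtain ⟨s, hsS, hst⟩ := (csInf_lt_iff hbdd hne).1 ht
  exact le_trans hsS (hmono hst.le)

lemma quantAux_le (hmono : Monotone G) (hrc : ∀ t, ContinuousWithinAt G (Set.Ici t) t)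
    (htop : Tendsto G atTop (nhds 1)) (hbot : Tendsto G atBot (nhds 0))
    {v t : ℝ} (hv0 : 0 < v) (hv1 : v < 1) (ht : sInf {t : ℝ | v ≤ G t} ≤ t) :
    v ≤ G t :=
  le_trans (quantAux_mem hmono hrc htop hbot hv0 hv1) (hmono ht)

lemma quantAux_lt (hmono : Monotone G) (hbot : Tendsto G atBot (nhds 0))
    {v t : ℝ} (hv0 : 0 < v) (ht : t < sInf {t : ℝ | v ≤ G t}) :
    G t < v := by
  by_contra h
  push_neg at h
  exact absurd (csInf_le (quantAux_bdd hmono hbot hv0) h) (not_le.2 ht)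

end QuantileAux

/-- If CDFs `F_n` converge to a CDF `F` at every continuity point of `F`, then the
generalized inverses (quantile functions) `F_n⁻¹(u) = inf{t : F_n(t) ≥ u}` converge to
`F⁻¹(u)` at every continuity point `u ∈ (0,1)` of `F⁻¹`. -/
theorem quantile_convergence_of_cdf_convergence
    (F : ℕ → ℝ → ℝ) (Flim : ℝ → ℝ)
    (hFmono : ∀ n, Monotone (F n)) (hFlimMono : Monotone Flim)
    (hFrc : ∀ n t, ContinuousWithinAt (F n) (Set.Ici t) t)
    (hFlimrc : ∀ t, ContinuousWithinAt Flim (Set.Ici t) t)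
    (hFtop : ∀ n, Tendsto (F n) atTop (nhds 1)) (hFbot : ∀ n, Tendsto (F n) atBot (nhds 0))
    (hFlimtop : Tendsto Flim atTop (nhds 1)) (hFlimbot : Tendsto Flim atBot (nhds 0))
    (hconv : ∀ t, ContinuousAt Flim t → Tendsto (fun n => F n t) atTop (nhds (Flim t))) :
    ∀ u ∈ Set.Ioo (0 : ℝ) 1,
      ContinuousAt (fun v => sInf {t : ℝ | v ≤ Flim t}) u →
        Tendsto (fun n => sInf {t : ℝ | u ≤ F n t}) atTop
          (nhds (sInf {t : ℝ | u ≤ Flim t})) := by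
  intro u hu hQcont
  obtain ⟨hu0, hu1⟩ := hu
  set Q : ℝ → ℝ := fun v => sInf {t : ℝ | v ≤ Flim t} with hQdef
  set L : ℝ := Q u with hLdef
  -- dense set of continuity points of Flim
  have hdense : Dense {t : ℝ | ¬ContinuousAt Flim t}ᶜ :=
    (hFlimMono.countable_not_continuousAt).dense_compl ℝ
  rw [tendsto_order]
  constructor
  · -- lower bound
    intro a ha
    obtain ⟨t, htc, htab⟩ := hdense.exists_mem_open isOpen_Ioo (Set.nonempty_Ioo.2 ha)
    have htcont : ContinuousAt Flim t := not_not.1 htc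
    have hFt : Flim t < u := quantAux_lt hFlimMono hFlimbot hu0 htab.2
    have hev : ∀ᶠ n in atTop, F n t < u :=
      (hconv t htcont).eventually (eventually_lt_nhds hFt)
    filter_upwards [hev] with n hn
    refine lt_of_lt_of_le htab.1 ?_
    by_contra h
    push_neg at h
    exact absurd (quantAux_le (hFmono n) (hFrc n) (hFtop n) (hFbot n) hu0 hu1 h.le)
      (not_le.2 hn)
  · -- upper bound
    intro b hb
    -- find v > u with Q v < b
    have h1 : ∀ᶠ v in nhdsWithin u (Set.Ioi u), Q v < b ∧ v < 1 ∧ u < v := by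
      have hQ : Tendsto Q (nhdsWithin u (Set.Ioi u)) (nhds L) :=
        hQcont.continuousWithinAt
      filter_upwards [hQ.eventually (eventually_lt_nhds hb),
        eventually_nhdsWithin_of_eventually_nhds (eventually_lt_nhds hu1),
        self_mem_nhdsWithin] with v h1 h2 h3
      exact ⟨h1, h2, h3⟩
    obtain ⟨v, hQv, hv1, huv⟩ := h1.exists
    have hvL : Q v < b := hQv
    obtain ⟨t, htc, htab⟩ := hdense.exists_mem_open isOpen_Ioo (Set.nonempty_Ioo.2 hvL)
    have htcont : ContinuousAt Flim t := not_not.1 htc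
    have hFt : u < Flim t :=
      lt_of_lt_of_le huv
        (quantAux_le hFlimMono hFlimrc hFlimtop hFlimbot (hu0.trans huv) hv1 htab.1.le)
    have hev : ∀ᶠ n in atTop, u < F n t :=
      (hconv t htcont).eventually (eventually_gt_nhds hFt)
    filter_upwards [hev] with n hn
    exact lt_of_le_of_lt (csInf_le (quantAux_bdd (hFmono n) (hFbot n) hu0) hn.le) htab.2
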